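/- Let G = (V,E) be a perfect graph with node weights w ∈ ℝ_+^V and edge weights satisfying w_{ij} ≥ max{w_i, w_j} for all edges ij ∈ E. Then rk_H(G,w) ≤ ω(G), where ω(G) is the maximum size of a clique in G. Moreover, in the unweighted case (w all-ones, all edge weights 1), if G is in addition vertex-transitive then rk_H(G) = ω(G). -/

import Mathlib

/-!
For a perfect graph, weighted stable-set duality gives cliques `Q` with weights `y_Q ≥ 0`,
`∑ y_Q = α(G,w)`, covering each vertex `i` exactly `w_i` times. Such a cover is built by
repeatedly lowering the weights on a clique that meets every maximum-weight stable set; that such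
a clique exists follows from Lovász's replication lemma. Then
`f_{G,w} = ∑_Q y_Q g_Q + ½ ∑_{i ~ j} (w_{ij} - ∑_{Q ∋ i,j} y_Q) x_i x_j` (ordered pairs), where
`g_Q = 1 - ∑_{i ∈ Q} x_i + ∑_{i < j ∈ Q} x_i x_j`. The coefficients are nonnegative because
`∑_{Q ∋ i,j} y_Q ≤ w_i ≤ w_{ij}`, and `g_Q ∈ H_{|Q|}` by the recursion
`g_{Q+a} = (1 - x_a) g_Q + x_a e₂(Q)`.

For the lower bound, evaluate a certificate in `H_t` at `0` and at the indicator vectors of the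
maximum stable sets, where `f_G` vanishes: some `T` with `|T| ≤ t` meets every maximum stable set.
In a vertex-transitive graph `ω α ≤ |V|`, so the `ω` colour classes of an optimal colouring of a
perfect graph are disjoint maximum stable sets, forcing `|T| ≥ ω`.
-/

open MvPolynomial Finset

noncomputable def handTerm {V : Type*} [DecidableEq V] (T I : Finset V) : MvPolynomial V ℝ :=
  (∏ i ∈ I, X i) * ∏ j ∈ T \ I, (1 - X j)

def InHandelman {V : Type*} [Fintype V] [DecidableEq V] (t : ℕ)
    (p : MvPolynomial V ℝ) : Prop :=
  ∃ c : Finset V → Finset V → ℝ,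
    (∀ T I, 0 ≤ c T I) ∧
    p = ∑ T ∈ Finset.univ.filter (fun T : Finset V => T.card ≤ t),
          ∑ I ∈ T.powerset, C (c T I) * handTerm T I

open Classical in
noncomputable def pGW {V : Type*} [Fintype V] (G : SimpleGraph V)
    (w : V → ℝ) (W : V → V → ℝ) : MvPolynomial V ℝ :=
  (∑ i, C (w i) * X i) -
    C (2⁻¹ : ℝ) * ∑ q ∈ Finset.univ.filter (fun q : V × V => G.Adj q.1 q.2),
      C (W q.1 q.2) * (X q.1 * X q.2)

noncomputable def alphaW {V : Type*} (G : SimpleGraph V) (w : V → ℝ) : ℝ :=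
  sSup {v : ℝ | ∃ S : Finset V, (∀ i ∈ S, ∀ j ∈ S, ¬ G.Adj i j) ∧ v = ∑ i ∈ S, w i}

-- The clique number `ω(G)`: the maximum cardinality of a clique of `G`.
open Classical in
noncomputable def cliqueNumber' {V : Type*} [Fintype V] (G : SimpleGraph V) : ℕ :=
  Finset.sup
    (Finset.univ.filter fun Cq : Finset V => ∀ i ∈ Cq, ∀ j ∈ Cq, i ≠ j → G.Adj i j)
    Finset.card

/-- `G` is perfect: every induced subgraph `H` satisfies `χ(H) = ω(H)`. -/
def IsPerfect {V : Type*} [Fintype V] [DecidableEq V] (G : SimpleGraph V) : Prop :=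
  ∀ s : Finset V,
    (G.induce (↑s : Set V)).chromaticNumber = (cliqueNumber' (G.induce (↑s : Set V)) : ℕ∞)

namespace SimpleGraph

variable {V : Type*} {G : SimpleGraph V}

lemma isIndepSet_coe_iff {S : Finset V} :
    G.IsIndepSet (S : Set V) ↔ ∀ i ∈ S, ∀ j ∈ S, ¬ G.Adj i j :=
  ⟨fun h _ hi _ hj hij => h hi hj (G.ne_of_adj hij) hij, fun h _ hi _ hj _ => h _ hi _ hj⟩

lemma IsIndepSet.card_inter_le_one_of_isClique [DecidableEq V] {S Q : Finset V}
    (hS : G.IsIndepSet (S : Set V)) (hQ : G.IsClique (Q : Set V)) : (S ∩ Q).card ≤ 1 :=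
  Finset.card_le_one.2 fun a ha b hb => by
    simp only [Finset.mem_inter] at ha hb
    by_contra hab
    exact hS ha.1 hb.1 hab (hQ ha.2 hb.2 hab)

lemma sum_card_filter_mem_le_card_sub_one [DecidableEq V] {F : Finset (Finset V)}
    (hF : ∀ S ∈ F, G.IsIndepSet (S : Set V)) {Q S₀ : Finset V} (hQ : G.IsClique (Q : Set V))
    (hS₀ : S₀ ∈ F) (hQS₀ : Q ∩ S₀ = ∅) :
    ∑ i ∈ Q, (F.filter (i ∈ ·)).card ≤ F.card - 1 :=
  calc ∑ i ∈ Q, (F.filter (i ∈ ·)).card = ∑ S ∈ F, (Q ∩ S).card := by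
        simp_rw [← Finset.filter_mem_eq_inter, Finset.card_eq_sum_ones, Finset.sum_filter]
        exact Finset.sum_comm
    _ = ∑ S ∈ F.erase S₀, (Q ∩ S).card := by
        rw [← Finset.add_sum_erase _ _ hS₀, hQS₀, Finset.card_empty, zero_add]
    _ ≤ ∑ S ∈ F.erase S₀, 1 := Finset.sum_le_sum fun S hS => by
        rw [Finset.inter_comm]
        exact (hF S (Finset.mem_of_mem_erase hS)).card_inter_le_one_of_isClique hQ
    _ = F.card - 1 := by simp [Finset.card_erase_of_mem hS₀]

end SimpleGraph

open SimpleGraph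

section AlphaW

variable {V : Type*} [Fintype V] {G : SimpleGraph V} {w : V → ℝ}

lemma cliqueNumber'_eq_cliqueNum (G : SimpleGraph V) : cliqueNumber' G = G.cliqueNum := by
  classical
  refine le_antisymm (Finset.sup_le fun Q hQ => ?_) ?_
  · exact IsClique.card_le_cliqueNum (tc := (Finset.mem_filter.1 hQ).2)
  · obtain ⟨Q, hQ⟩ := G.exists_isNClique_cliqueNum
    rw [← hQ.card_eq]
    exact Finset.le_sup (f := Finset.card) (Finset.mem_filter.2 ⟨Finset.mem_univ _, hQ.isClique⟩)

lemma isGreatest_alphaW (G : SimpleGraph V) (w : V → ℝ) :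
    IsGreatest {v : ℝ | ∃ S : Finset V, (∀ i ∈ S, ∀ j ∈ S, ¬ G.Adj i j) ∧ v = ∑ i ∈ S, w i}
      (alphaW G w) := by
  have hfin : {v : ℝ | ∃ S : Finset V, (∀ i ∈ S, ∀ j ∈ S, ¬ G.Adj i j) ∧
      v = ∑ i ∈ S, w i}.Finite :=
    (Set.finite_range fun S : Finset V => ∑ i ∈ S, w i).subset fun _ ⟨S, _, hv⟩ => ⟨S, hv.symm⟩
  exact ⟨Set.Nonempty.csSup_mem ⟨0, ∅, by simp⟩ hfin, fun _ hv => le_csSup hfin.bddAbove hv⟩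

lemma le_alphaW {S : Finset V} (hS : G.IsIndepSet (S : Set V)) :
    ∑ i ∈ S, w i ≤ alphaW G w :=
  (isGreatest_alphaW G w).2 ⟨S, isIndepSet_coe_iff.1 hS, rfl⟩

lemma exists_isIndepSet_sum_eq_alphaW (G : SimpleGraph V) (w : V → ℝ) :
    ∃ S : Finset V, G.IsIndepSet (S : Set V) ∧ ∑ i ∈ S, w i = alphaW G w := by
  obtain ⟨S, hS, h⟩ := (isGreatest_alphaW G w).1
  exact ⟨S, isIndepSet_coe_iff.2 hS, h.symm⟩

lemma alphaW_nonneg (G : SimpleGraph V) (w : V → ℝ) : 0 ≤ alphaW G w := by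
  simpa using le_alphaW (G := G) (w := w) (S := ∅) (by simp)

lemma alphaW_one (G : SimpleGraph V) : alphaW G (fun _ => 1) = G.indepNum := by
  obtain ⟨S, hS, hα⟩ := exists_isIndepSet_sum_eq_alphaW G fun _ => 1
  obtain ⟨S', hS'⟩ := G.exists_isNIndepSet_indepNum
  have h := le_alphaW (w := fun _ => 1) hS'.isIndepSet
  simp only [Finset.sum_const, nsmul_eq_mul, mul_one, hS'.card_eq] at hα h
  exact le_antisymm (hα ▸ mod_cast hS.card_le_indepNum) h

lemma one_le_alphaW_one [Nonempty V] (G : SimpleGraph V) : 1 ≤ alphaW G (fun _ => 1) := by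
  obtain ⟨v⟩ := ‹Nonempty V›
  simpa using le_alphaW (G := G) (w := fun _ => 1) (S := {v}) (by simp)

lemma exists_isIndepSet_sum_eq_alphaW_pos (G : SimpleGraph V) (hw : ∀ i, 0 ≤ w i) :
    ∃ S : Finset V, G.IsIndepSet (S : Set V) ∧ (∀ i ∈ S, 0 < w i) ∧ ∑ i ∈ S, w i = alphaW G w := by
  obtain ⟨S, hS, hα⟩ := exists_isIndepSet_sum_eq_alphaW G w
  refine ⟨S.filter (0 < w ·), hS.mono (Finset.coe_subset.2 (Finset.filter_subset _ _)),
    fun i hi => (Finset.mem_filter.1 hi).2, ?_⟩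
  rw [Finset.sum_filter_of_ne fun i _ hi => (hw i).lt_of_ne' hi, hα]

end AlphaW

lemma Finset.sum_offDiag_mul_eq {α R : Type*} [DecidableEq α] [CommRing R] (s : Finset α)
    (f : α → R) : ∑ q ∈ s.offDiag, f q.1 * f q.2 = (∑ i ∈ s, f i) ^ 2 - ∑ i ∈ s, f i ^ 2 := by
  have hdiag : ∑ q ∈ s.diag, f q.1 * f q.2 = ∑ i ∈ s, f i ^ 2 := by
    simp [Finset.diag, sq]
  rw [eq_sub_iff_add_eq, ← hdiag, add_comm, ← Finset.sum_union (Finset.disjoint_diag_offDiag s),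
    Finset.diag_union_offDiag, Finset.sum_product, sq, Finset.sum_mul_sum]

section HandelmanCone

variable {V : Type*} [DecidableEq V]

noncomputable def handelmanCone (𝒯 : Set (Finset V)) : PointedCone ℝ (MvPolynomial V ℝ) :=
  PointedCone.hull ℝ {p | ∃ T ∈ 𝒯, ∃ I ⊆ T, handTerm T I = p}

lemma handTerm_mem_handelmanCone {𝒯 : Set (Finset V)} {T I : Finset V} (hT : T ∈ 𝒯)
    (hI : I ⊆ T) : handTerm T I ∈ handelmanCone 𝒯 :=
  Submodule.subset_span ⟨T, hT, I, hI, rfl⟩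

lemma handelmanCone_mono {𝒯 𝒯' : Set (Finset V)} (h : 𝒯 ⊆ 𝒯') :
    handelmanCone 𝒯 ≤ handelmanCone 𝒯' :=
  Submodule.span_mono fun _ ⟨T, hT, I, hI, hp⟩ => ⟨T, h hT, I, hI, hp⟩

lemma X_mul_X_mem_handelmanCone {𝒯 : Set (Finset V)} {i j : V} (hij : i ≠ j)
    (h : {i, j} ∈ 𝒯) : X i * X j ∈ handelmanCone 𝒯 := by
  convert handTerm_mem_handelmanCone h subset_rfl using 1
  simp [handTerm, hij]

lemma mul_mem_handelmanCone_insert {s : Finset V} {a : V} (ha : a ∉ s)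
    {q : MvPolynomial V ℝ} (hq : q = X a ∨ q = 1 - X a) {p : MvPolynomial V ℝ}
    (hp : p ∈ handelmanCone {T | T ⊆ s}) : q * p ∈ handelmanCone {T | T ⊆ insert a s} := by
  induction hp using Submodule.span_induction with
  | mem p hp =>
    obtain ⟨T, hT, I, hI, rfl⟩ := hp
    have haT : a ∉ T := fun h => ha (hT h)
    have haI : a ∉ I := fun h => haT (hI h)
    rcases hq with rfl | rfl
    · convert handTerm_mem_handelmanCone (𝒯 := {T | T ⊆ insert a s})
        (Finset.insert_subset_insert a hT) (Finset.insert_subset_insert a hI) using 1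
      rw [handTerm, handTerm, Finset.prod_insert haI, Finset.insert_sdiff_insert,
        Finset.sdiff_insert_of_notMem haT, mul_assoc]
    · convert handTerm_mem_handelmanCone (𝒯 := {T | T ⊆ insert a s})
        (Finset.insert_subset_insert a hT) (hI.trans (Finset.subset_insert a T)) using 1
      rw [handTerm, handTerm, Finset.insert_sdiff_of_notMem _ haI, Finset.prod_insert
        (fun h => haT (Finset.sdiff_subset h))]
      ring
  | zero => simp
  | add p p' _ _ hp hp' => simpa [mul_add] using add_mem hp hp'
  | smul c p _ hp => simpa [mul_smul_comm] using Submodule.smul_mem _ c hp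

lemma inHandelman_of_mem_handelmanCone [Fintype V] {t : ℕ} {p : MvPolynomial V ℝ}
    (hp : p ∈ handelmanCone {T | T.card ≤ t}) : InHandelman t p := by
  induction hp using Submodule.span_induction with
  | mem p hp =>
    obtain ⟨T, hT, I, hI, rfl⟩ := hp
    refine ⟨fun T' I' => if T' = T ∧ I' = I then 1 else 0, fun _ _ => by positivity, ?_⟩
    rw [Finset.sum_eq_single_of_mem T (by simpa using hT) fun T' _ hT' => by simp [hT'],
      Finset.sum_eq_single_of_mem I (by simpa using hI) fun I' _ hI' => by simp [hI']]
    simp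
  | zero => exact ⟨0, fun _ _ => le_rfl, by simp⟩
  | add p p' _ _ hp hp' =>
    obtain ⟨c, hc, rfl⟩ := hp
    obtain ⟨c', hc', rfl⟩ := hp'
    refine ⟨c + c', fun T I => add_nonneg (hc T I) (hc' T I), ?_⟩
    simp only [Pi.add_apply, map_add, add_mul, Finset.sum_add_distrib]
  | smul c p _ hp =>
    obtain ⟨d, hd, rfl⟩ := hp
    refine ⟨(c : ℝ) • d, fun T I => mul_nonneg c.2 (hd T I), ?_⟩
    simp only [Finset.smul_sum, Pi.smul_apply, smul_eq_mul, map_mul, mul_assoc]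
    exact Finset.sum_congr rfl fun _ _ => Finset.sum_congr rfl fun _ _ => C_mul'.symm

end HandelmanCone

section CliquePoly

variable {V : Type*} [DecidableEq V]

lemma C_mul_mem_handelmanCone {𝒯 : Set (Finset V)} {a : ℝ} (ha : 0 ≤ a)
    {p : MvPolynomial V ℝ} (hp : p ∈ handelmanCone 𝒯) : C a * p ∈ handelmanCone 𝒯 := by
  rw [C_mul']
  exact PointedCone.smul_mem _ ha hp

lemma half_sum_offDiag_mem_handelmanCone (s : Finset V) :
    C 2⁻¹ * ∑ q ∈ s.offDiag, X q.1 * X q.2 ∈ handelmanCone {T | T ⊆ s} := by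
  refine C_mul_mem_handelmanCone (by norm_num) (Submodule.sum_mem _ fun q hq => ?_)
  rw [Finset.mem_offDiag] at hq
  exact X_mul_X_mem_handelmanCone hq.2.2 (Finset.insert_subset hq.1 (by simpa using hq.2.1))

noncomputable def cliquePoly (Q : Finset V) : MvPolynomial V ℝ :=
  1 - ∑ i ∈ Q, X i + C 2⁻¹ * ∑ q ∈ Q.offDiag, X q.1 * X q.2

lemma cliquePoly_insert {s : Finset V} {a : V} (ha : a ∉ s) :
    cliquePoly (insert a s) =
      (1 - X a) * cliquePoly s + X a * (C 2⁻¹ * ∑ q ∈ s.offDiag, X q.1 * X q.2) := by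
  have h2 : (C 2⁻¹ : MvPolynomial V ℝ) * 2 = 1 := by
    rw [← map_ofNat C 2, ← map_mul]; norm_num
  simp only [cliquePoly, Finset.sum_offDiag_mul_eq, Finset.sum_insert ha]
  linear_combination (X a * ∑ i ∈ s, X i) * h2

lemma cliquePoly_mem_handelmanCone (Q : Finset V) :
    cliquePoly Q ∈ handelmanCone {T | T ⊆ Q} := by
  induction Q using Finset.induction_on with
  | empty =>
    convert handTerm_mem_handelmanCone (𝒯 := {T | T ⊆ ∅}) (Finset.Subset.refl ∅)
      (Finset.Subset.refl ∅)
    simp [cliquePoly, handTerm]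
  | insert a s ha ih =>
    rw [cliquePoly_insert ha]
    exact add_mem (mul_mem_handelmanCone_insert ha (Or.inr rfl) ih)
      (mul_mem_handelmanCone_insert ha (Or.inl rfl) (half_sum_offDiag_mem_handelmanCone s))

end CliquePoly

section Certificate

variable {V : Type*} [Fintype V] [DecidableEq V] {G : SimpleGraph V} {w : V → ℝ}
  {y : Finset V → ℝ}

structure IsFractionalCliqueCover (G : SimpleGraph V) (w : V → ℝ) (y : Finset V → ℝ) :
    Prop where
  nonneg : ∀ Q, 0 ≤ y Q
  isClique_of_ne_zero : ∀ Q, y Q ≠ 0 → G.IsClique (Q : Set V)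
  sum_filter_mem : ∀ i, ∑ Q with i ∈ Q, y Q = w i

lemma IsFractionalCliqueCover.sum_C_mul_sum_X (hy : IsFractionalCliqueCover G w y) :
    ∑ Q, C (y Q) * ∑ i ∈ Q, X i = ∑ i, C (w i) * (X i : MvPolynomial V ℝ) := by
  simp only [Finset.mul_sum, ← hy.sum_filter_mem, map_sum, Finset.sum_mul]
  exact Finset.sum_comm' fun Q i => by simp

open Classical in
lemma IsFractionalCliqueCover.sum_C_mul_sum_offDiag (hy : IsFractionalCliqueCover G w y) :
    ∑ Q, C (y Q) * ∑ q ∈ Q.offDiag, X q.1 * X q.2 =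
      ∑ q ∈ Finset.univ.filter (fun q : V × V => G.Adj q.1 q.2),
        C (∑ Q with q.1 ∈ Q ∧ q.2 ∈ Q, y Q) * (X q.1 * (X q.2 : MvPolynomial V ℝ)) := by
  have hQ : ∀ Q, C (y Q) * ∑ q ∈ Q.offDiag, X q.1 * X q.2 =
      ∑ q ∈ Finset.univ.filter (fun q : V × V => G.Adj q.1 q.2),
        if q.1 ∈ Q ∧ q.2 ∈ Q then C (y Q) * (X q.1 * (X q.2 : MvPolynomial V ℝ)) else 0 := by
    intro Q
    rcases eq_or_ne (y Q) 0 with h | h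
    · simp [h]
    rw [← Finset.sum_filter, Finset.filter_filter, Finset.mul_sum]
    refine Finset.sum_congr (Finset.ext fun q => ?_) fun _ _ => rfl
    simp only [Finset.mem_offDiag, Finset.mem_filter, Finset.mem_univ, true_and]
    exact ⟨fun ⟨h1, h2, hne⟩ => ⟨hy.isClique_of_ne_zero Q h h1 h2 hne, h1, h2⟩,
      fun ⟨hadj, h1, h2⟩ => ⟨h1, h2, hadj.ne⟩⟩
  simp only [hQ, map_sum, Finset.sum_mul]
  rw [Finset.sum_comm]
  exact Finset.sum_congr rfl fun q _ => by rw [Finset.sum_filter]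

open Classical in
lemma IsFractionalCliqueCover.C_sub_pGW_eq (hy : IsFractionalCliqueCover G w y)
    (W : V → V → ℝ) :
    C (∑ Q, y Q) - pGW G w W = ∑ Q, C (y Q) * cliquePoly Q +
      C 2⁻¹ * ∑ q ∈ Finset.univ.filter (fun q : V × V => G.Adj q.1 q.2),
        C (W q.1 q.2 - ∑ Q with q.1 ∈ Q ∧ q.2 ∈ Q, y Q) * (X q.1 * X q.2) := by
  have hexpand : ∀ Q, C (y Q) * cliquePoly Q = C (y Q) - C (y Q) * ∑ i ∈ Q, X i +
      C 2⁻¹ * (C (y Q) * ∑ q ∈ Q.offDiag, X q.1 * X q.2) := fun Q => by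
    unfold cliquePoly; ring
  simp only [hexpand, Finset.sum_add_distrib, Finset.sum_sub_distrib, ← Finset.mul_sum,
    hy.sum_C_mul_sum_X, hy.sum_C_mul_sum_offDiag, map_sub, sub_mul, map_sum, pGW]
  ring

end Certificate

section ColoringOn

variable {α : Type*} {H : SimpleGraph α}

variable (H) in
open Classical in
noncomputable def cliqueNumOn (B : Finset α) : ℕ :=
  (B.powerset.filter fun K : Finset α => H.IsClique (K : Set α)).sup Finset.card

variable (H) in
def IsColoringOn (B : Finset α) (m : ℕ) (c : α → ℕ) : Prop :=
  (∀ p ∈ B, c p < m) ∧ ∀ p ∈ B, ∀ q ∈ B, H.Adj p q → c p ≠ c q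

lemma SimpleGraph.IsClique.card_le_cliqueNumOn {K B : Finset α} (hKB : K ⊆ B)
    (hK : H.IsClique (K : Set α)) : K.card ≤ cliqueNumOn H B := by
  classical
  exact Finset.le_sup (f := Finset.card) (Finset.mem_filter.2 ⟨Finset.mem_powerset.2 hKB, hK⟩)

lemma exists_isClique_card_eq_cliqueNumOn (H : SimpleGraph α) (B : Finset α) :
    ∃ K ⊆ B, H.IsClique (K : Set α) ∧ K.card = cliqueNumOn H B := by
  classical
  obtain ⟨K, hK, hcard⟩ := Finset.exists_mem_eq_sup
    (B.powerset.filter fun K : Finset α => H.IsClique (K : Set α))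
    ⟨∅, Finset.mem_filter.2 ⟨Finset.empty_mem_powerset B, by
      rw [Finset.coe_empty]; exact SimpleGraph.isClique_empty⟩⟩ Finset.card
  obtain ⟨hKB, hKc⟩ := Finset.mem_filter.1 hK
  exact ⟨K, Finset.mem_powerset.1 hKB, hKc, hcard.symm⟩

lemma cliqueNumOn_mono {B B' : Finset α} (h : B ⊆ B') : cliqueNumOn H B ≤ cliqueNumOn H B' := by
  obtain ⟨K, hKB, hK, hcard⟩ := exists_isClique_card_eq_cliqueNumOn H B
  exact hcard ▸ hK.card_le_cliqueNumOn (hKB.trans h)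

lemma IsColoringOn.mono {B B' : Finset α} {m m' : ℕ} {c : α → ℕ} (hc : IsColoringOn H B' m c)
    (hB : B ⊆ B') (hm : m ≤ m') : IsColoringOn H B m' c :=
  ⟨fun p hp => (hc.1 p (hB hp)).trans_le hm,
    fun p hp q hq => hc.2 p (hB hp) q (hB hq)⟩

lemma IsColoringOn.exists_union_isIndepSet [DecidableEq α] {B S : Finset α} {m : ℕ}
    {c : α → ℕ} (hc : IsColoringOn H B m c) (hS : H.IsIndepSet (S : Set α)) :
    ∃ c', IsColoringOn H (B ∪ S) (m + 1) c' := by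
  refine ⟨fun p => if p ∈ S then m else c p, fun p hp => ?_, fun p hp q hq hpq => ?_⟩ <;> dsimp only
  · split_ifs with h
    · exact m.lt_succ_self
    · exact (hc.1 p ((Finset.mem_union.1 hp).resolve_right h)).trans m.lt_succ_self
  · have hB {r} (hr : r ∈ B ∪ S) (h : r ∉ S) : r ∈ B := (Finset.mem_union.1 hr).resolve_right h
    split_ifs with h₁ h₂ h₂
    · exact absurd hpq (hS h₁ h₂ hpq.ne)
    · exact (hc.1 q (hB hq h₂)).ne'
    · exact (hc.1 p (hB hp h₁)).ne
    · exact hc.2 p (hB hp h₁) q (hB hq h₂) hpq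

lemma IsColoringOn.exists_mem_eq_of_isClique {B K : Finset α} {m : ℕ} {c : α → ℕ}
    (hc : IsColoringOn H B m c) (hKB : K ⊆ B) (hK : H.IsClique (K : Set α))
    (hcard : K.card = m) {k : ℕ} (hk : k < m) : ∃ p ∈ K, c p = k := by
  classical
  have himage : K.image c = Finset.range m := by
    refine Finset.eq_of_subset_of_card_le
      (Finset.image_subset_iff.2 fun p hp => Finset.mem_range.2 (hc.1 p (hKB hp))) ?_
    rw [Finset.card_range, Finset.card_image_of_injOn, hcard]
    intro p hp q hq hpq
    by_contra hne
    exact hc.2 p (hKB hp) q (hKB hq) (hK hp hq hne) hpq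
  have hk' := Finset.mem_range.2 hk
  rwa [← himage, Finset.mem_image] at hk'

end ColoringOn

section Twins

variable {α : Type*} [DecidableEq α] {H : SimpleGraph α} {B : Finset α} {x x' : α}

/-- Adding a twin `x'` of a vertex `x` of a maximum clique `K` gives a larger clique. -/
lemma notMem_of_isClique_card_eq_cliqueNumOn_erase (hx' : x' ∈ B) (hxx' : H.Adj x x')
    (htwin : ∀ z, z ≠ x → z ≠ x' → (H.Adj x z ↔ H.Adj x' z)) {K : Finset α} (hKB : K ⊆ B.erase x')
    (hK : H.IsClique (K : Set α)) (hcard : K.card = cliqueNumOn H B) : x ∉ K := by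
  intro hxK
  have hx'K : x' ∉ K := fun h => Finset.notMem_erase x' B (hKB h)
  have hclique : H.IsClique ((insert x' K : Finset α) : Set α) := by
    rw [Finset.coe_insert, SimpleGraph.isClique_insert]
    refine ⟨hK, fun b hb hne => ?_⟩
    by_cases hbx : b = x
    · exact hbx ▸ hxx'.symm
    · exact (htwin b hbx (Ne.symm hne)).1 (hK hxK hb (Ne.symm hbx))
  have := hclique.card_le_cliqueNumOn
    (Finset.insert_subset hx' (hKB.trans (Finset.erase_subset x' B)))
  rw [Finset.card_insert_of_notMem hx'K, hcard] at this
  omega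

/-- The other vertices of the colour class of `x`, together with its twin `x'`, form a stable
set. -/
lemma IsColoringOn.isIndepSet_insert_erase_filter {m : ℕ} {c : α → ℕ}
    (hc : IsColoringOn H (B.erase x') m c) (hx : x ∈ B.erase x')
    (htwin : ∀ z, z ≠ x → z ≠ x' → (H.Adj x z ↔ H.Adj x' z)) :
    H.IsIndepSet ((insert x' (((B.erase x').filter (c · = c x)).erase x) : Finset α) : Set α) := by
  have hmem {a : α} (ha : a ∈ ((B.erase x').filter (c · = c x)).erase x) :
      a ≠ x ∧ a ∈ B.erase x' ∧ c a = c x := by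
    simpa only [Finset.mem_erase, Finset.mem_filter] using ha
  have hnadj {a : α} (ha : a ∈ ((B.erase x').filter (c · = c x)).erase x) : ¬ H.Adj x' a :=
    fun hadj => by
      obtain ⟨hax, haB, hca⟩ := hmem ha
      exact hc.2 x hx a haB ((htwin a hax (Finset.ne_of_mem_erase haB)).2 hadj) hca.symm
  refine isIndepSet_coe_iff.2 fun a ha b hb hab => ?_
  rcases Finset.mem_insert.1 ha with rfl | ha <;> rcases Finset.mem_insert.1 hb with rfl | hb
  · exact hab.ne rfl
  · exact hnadj hb hab
  · exact hnadj ha hab.symm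
  · obtain ⟨-, haB, hca⟩ := hmem ha
    obtain ⟨-, hbB, hcb⟩ := hmem hb
    exact hc.2 a haB b hbB hab (hca.trans hcb.symm)

/-- Recolour the other vertices of the colour class of `x` together with `x'`: removing them
lowers the clique number, since every maximum clique avoids `x` and meets its colour class. -/
lemma exists_isColoringOn_of_twin_of_isColoringOn_erase (hx' : x' ∈ B) (hxx' : H.Adj x x')
    (htwin : ∀ z, z ≠ x → z ≠ x' → (H.Adj x z ↔ H.Adj x' z)) {c : α → ℕ}
    (hc : IsColoringOn H (B.erase x') (cliqueNumOn H B) c) (hxB : x ∈ B.erase x')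
    (ih : ∀ B' ⊂ B, ∃ c, IsColoringOn H B' (cliqueNumOn H B') c) :
    ∃ c, IsColoringOn H B (cliqueNumOn H B) c := by
  set A := ((B.erase x').filter (c · = c x)).erase x
  have hlt : cliqueNumOn H (B.erase x' \ A) < cliqueNumOn H B := by
    obtain ⟨K, hKB, hK, hcard⟩ := exists_isClique_card_eq_cliqueNumOn H (B.erase x' \ A)
    refine ((cliqueNumOn_mono Finset.sdiff_subset).trans
      (cliqueNumOn_mono (Finset.erase_subset x' B))).lt_of_ne fun hK' => ?_
    have hKB' : K ⊆ B.erase x' := hKB.trans Finset.sdiff_subset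
    obtain ⟨p, hpK, hp⟩ := hc.exists_mem_eq_of_isClique hKB' hK (hcard.trans hK') (hc.1 x hxB)
    have hpx : p ≠ x := fun h => notMem_of_isClique_card_eq_cliqueNumOn_erase hx' hxx' htwin
      hKB' hK (hcard.trans hK') (h ▸ hpK)
    exact (Finset.mem_sdiff.1 (hKB hpK)).2
      (Finset.mem_erase.2 ⟨hpx, Finset.mem_filter.2 ⟨hKB' hpK, hp⟩⟩)
  obtain ⟨c', hc'⟩ := ih _ (Finset.sdiff_subset.trans_ssubset (Finset.erase_ssubset hx'))
  obtain ⟨c'', hc''⟩ := (hc'.mono subset_rfl (Nat.le_sub_one_of_lt hlt)).exists_union_isIndepSet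
    (hc.isIndepSet_insert_erase_filter hxB htwin)
  refine ⟨c'', hc''.mono (fun p hp => ?_) (Nat.sub_add_cancel (Nat.one_le_of_lt hlt)).le⟩
  by_cases hpx' : p = x'
  · exact Finset.mem_union_right _ (Finset.mem_insert.2 (Or.inl hpx'))
  by_cases hpA : p ∈ A
  · exact Finset.mem_union_right _ (Finset.mem_insert_of_mem hpA)
  · exact Finset.mem_union_left _ (Finset.mem_sdiff.2 ⟨Finset.mem_erase.2 ⟨hpx', hp⟩, hpA⟩)

/-- The inductive step of Lovász's replication lemma. -/
theorem exists_isColoringOn_of_twin (hx : x ∈ B) (hx' : x' ∈ B) (hxx' : H.Adj x x')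
    (htwin : ∀ z, z ≠ x → z ≠ x' → (H.Adj x z ↔ H.Adj x' z))
    (ih : ∀ B' ⊂ B, ∃ c, IsColoringOn H B' (cliqueNumOn H B') c) :
    ∃ c, IsColoringOn H B (cliqueNumOn H B) c := by
  obtain ⟨c, hc⟩ := ih _ (Finset.erase_ssubset hx')
  rcases (cliqueNumOn_mono (H := H) (Finset.erase_subset x' B)).lt_or_eq with hlt | heq
  · obtain ⟨c', hc'⟩ := hc.exists_union_isIndepSet (S := {x'}) (by simp)
    exact ⟨c', hc'.mono (by rw [Finset.union_singleton, Finset.insert_erase hx']) hlt⟩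
  · exact exists_isColoringOn_of_twin_of_isColoringOn_erase hx' hxx' htwin (heq ▸ hc)
      (Finset.mem_erase.2 ⟨hxx'.ne, hx⟩) ih

end Twins

/-- The lexicographic product `G[K_ℕ]`: every vertex becomes infinitely many pairwise adjacent
copies. -/
def SimpleGraph.blowup {V : Type*} (G : SimpleGraph V) : SimpleGraph (V × ℕ) where
  Adj p q := p ≠ q ∧ (p.1 = q.1 ∨ G.Adj p.1 q.1)
  symm := ⟨fun _ _ h => ⟨h.1.symm, h.2.imp Eq.symm G.adj_symm⟩⟩
  loopless := ⟨fun _ h => h.1 rfl⟩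

@[simp]
lemma SimpleGraph.blowup_adj {V : Type*} {G : SimpleGraph V} {p q : V × ℕ} :
    G.blowup.Adj p q ↔ p ≠ q ∧ (p.1 = q.1 ∨ G.Adj p.1 q.1) :=
  Iff.rfl

section Replication

variable {V : Type*} [DecidableEq V] {G : SimpleGraph V}

lemma IsPerfect.exists_isColoringOn [Fintype V] (hG : IsPerfect G) (s : Finset V) :
    ∃ c : V → ℕ, IsColoringOn G s (cliqueNumOn G s) c := by
  obtain ⟨col⟩ := SimpleGraph.chromaticNumber_le_iff_colorable.1 (hG s).le
  have hle : cliqueNumber' (G.induce (s : Set V)) ≤ cliqueNumOn G s := by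
    obtain ⟨t, ht⟩ := (G.induce (s : Set V)).exists_isNClique_cliqueNum
    rw [cliqueNumber'_eq_cliqueNum, ← ht.card_eq, ← Finset.card_map (Function.Embedding.subtype _)]
    refine IsClique.card_le_cliqueNumOn (fun v hv => ?_) ?_
    · obtain ⟨u, -, rfl⟩ := Finset.mem_map.1 hv
      exact u.2
    · rw [Finset.coe_map]
      exact isClique_induce_iff.1 ht.isClique
  refine ⟨fun v => if h : v ∈ s then col ⟨v, h⟩ else 0, fun v hv => ?_, fun u hu v hv huv => ?_⟩
  · simp only [dif_pos hv]
    exact (col ⟨v, hv⟩).isLt.trans_le hle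
  · simp only [dif_pos hu, dif_pos hv]
    exact fun h => col.valid (v := ⟨u, hu⟩) (w := ⟨v, hv⟩) huv (Fin.val_injective h)

lemma cliqueNumOn_image_fst_le {B : Finset (V × ℕ)} (hB : Set.InjOn Prod.fst (B : Set (V × ℕ))) :
    cliqueNumOn G (B.image Prod.fst) ≤ cliqueNumOn G.blowup B := by
  obtain ⟨K, hKB, hK, hcard⟩ := exists_isClique_card_eq_cliqueNumOn G (B.image Prod.fst)
  have himage : (B.filter (·.1 ∈ K)).image Prod.fst = K := by
    ext i
    simp only [Finset.mem_image, Finset.mem_filter]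
    refine ⟨fun ⟨p, ⟨_, hp⟩, hpi⟩ => hpi ▸ hp, fun hi => ?_⟩
    obtain ⟨p, hp, rfl⟩ := Finset.mem_image.1 (hKB hi)
    exact ⟨p, ⟨hp, hi⟩, rfl⟩
  have hinj : Set.InjOn Prod.fst ((B.filter (·.1 ∈ K) : Finset (V × ℕ)) : Set (V × ℕ)) :=
    hB.mono (by simp +contextual [Set.subset_def])
  rw [← hcard, ← himage, Finset.card_image_of_injOn hinj]
  refine IsClique.card_le_cliqueNumOn (Finset.filter_subset _ _) fun p hp q hq hpq => ?_
  have hpq' : p.1 ≠ q.1 := fun h => hpq (hinj hp hq h)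
  simp only [Finset.coe_filter, Set.mem_ofPred_eq] at hp hq
  exact blowup_adj.2 ⟨hpq, Or.inr (hK hp.2 hq.2 hpq')⟩

lemma IsPerfect.exists_isColoringOn_blowup_of_injOn [Fintype V] (hG : IsPerfect G)
    {B : Finset (V × ℕ)} (hB : Set.InjOn Prod.fst (B : Set (V × ℕ))) :
    ∃ c, IsColoringOn G.blowup B (cliqueNumOn G.blowup B) c := by
  obtain ⟨c, hc⟩ := hG.exists_isColoringOn (B.image Prod.fst)
  refine ⟨c ∘ Prod.fst, fun p hp => ?_, fun p hp q hq hpq => ?_⟩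
  · exact (hc.1 _ (Finset.mem_image_of_mem _ hp)).trans_le (cliqueNumOn_image_fst_le hB)
  · refine hc.2 _ (Finset.mem_image_of_mem _ hp) _ (Finset.mem_image_of_mem _ hq) ?_
    rw [blowup_adj] at hpq
    exact hpq.2.resolve_left fun h => hpq.1 (hB hp hq h)

theorem IsPerfect.exists_isColoringOn_blowup [Fintype V] (hG : IsPerfect G) (B : Finset (V × ℕ)) :
    ∃ c, IsColoringOn G.blowup B (cliqueNumOn G.blowup B) c := by
  induction B using Finset.strongInduction with
  | H B ih =>
  by_cases hB : Set.InjOn Prod.fst (B : Set (V × ℕ))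
  · exact hG.exists_isColoringOn_blowup_of_injOn hB
  obtain ⟨x, hx, x', hx', hfst, hne⟩ : ∃ x ∈ B, ∃ x' ∈ B, x.1 = x'.1 ∧ x ≠ x' := by
    simpa [Set.InjOn] using hB
  refine exists_isColoringOn_of_twin hx hx' (blowup_adj.2 ⟨hne, Or.inl hfst⟩)
    (fun z hzx hzx' => ?_) ih
  simp [hfst, Ne.symm hzx, Ne.symm hzx']

end Replication

section CliqueTransversal

variable {V : Type*} [Fintype V] [DecidableEq V] {G : SimpleGraph V} {w : V → ℝ}

def replicas (u : V → ℕ) : Finset (V × ℕ) :=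
  Finset.univ.biUnion fun i => {i} ×ˢ Finset.range (u i)

lemma mem_replicas {u : V → ℕ} {p : V × ℕ} : p ∈ replicas u ↔ p.2 < u p.1 := by
  simp [replicas, Prod.ext_iff]

lemma sum_replicas (u : V → ℕ) (f : V → ℝ) :
    ∑ p ∈ replicas u, f p.1 = ∑ i, u i * f i := by
  rw [Finset.sum_finset_product _ Finset.univ (fun i => Finset.range (u i))
    fun p => by simp [mem_replicas]]
  simp

lemma card_le_sum_of_subset_replicas {u : V → ℕ} {K : Finset (V × ℕ)}
    (hK : K ⊆ replicas u) : K.card ≤ ∑ i ∈ K.image Prod.fst, u i := by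
  rw [Finset.card_eq_sum_card_fiberwise fun p hp => Finset.mem_image_of_mem Prod.fst hp]
  refine Finset.sum_le_sum fun i _ => ?_
  calc (K.filter (·.1 = i)).card ≤ (Finset.range (u i)).card :=
        Finset.card_le_card_of_injOn Prod.snd
          (fun p hp => by
            obtain ⟨hpK, rfl⟩ := Finset.mem_filter.1 hp
            simpa using mem_replicas.1 (hK hpK))
          (fun p hp q hq h => Prod.ext ((Finset.mem_filter.1 hp).2.trans
            (Finset.mem_filter.1 hq).2.symm) h)
    _ = u i := Finset.card_range _

lemma IsColoringOn.sum_le_mul_alphaW {B : Finset (V × ℕ)} {m : ℕ} {c : V × ℕ → ℕ}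
    (hc : IsColoringOn G.blowup B m c) : ∑ p ∈ B, w p.1 ≤ m * alphaW G w := by
  rw [← Finset.sum_fiberwise_of_maps_to (g := c) (t := Finset.range m)
    fun p hp => Finset.mem_range.2 (hc.1 p hp)]
  refine (Finset.sum_le_sum (g := fun _ => alphaW G w) fun k _ => ?_).trans_eq (by simp)
  set C := B.filter (c · = k)
  have hmem {p : V × ℕ} (hp : p ∈ C) : p ∈ B ∧ c p = k := Finset.mem_filter.1 hp
  have hinj : Set.InjOn Prod.fst (C : Set (V × ℕ)) := fun p hp q hq h => by
    by_contra hpq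
    exact hc.2 p (hmem hp).1 q (hmem hq).1 (blowup_adj.2 ⟨hpq, Or.inl h⟩)
      ((hmem hp).2.trans (hmem hq).2.symm)
  rw [← Finset.sum_image hinj]
  refine le_alphaW fun i hi j hj hij hadj => ?_
  obtain ⟨p, hp, rfl⟩ := Finset.mem_image.1 hi
  obtain ⟨q, hq, rfl⟩ := Finset.mem_image.1 hj
  exact hc.2 p (hmem hp).1 q (hmem hq).1 (blowup_adj.2 ⟨fun h => hij (h ▸ rfl), Or.inr hadj⟩)
    ((hmem hp).2.trans (hmem hq).2.symm)

/-- Each of the `m` colour classes of the blow-up with `u i` copies of `i` projects to a stable set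
of `G`. -/
theorem IsPerfect.sum_mul_le_mul_alphaW (hG : IsPerfect G) (u : V → ℕ) (m : ℕ)
    (hu : ∀ Q : Finset V, G.IsClique (Q : Set V) → ∑ i ∈ Q, u i ≤ m) :
    ∑ i, u i * w i ≤ m * alphaW G w := by
  obtain ⟨c, hc⟩ := hG.exists_isColoringOn_blowup (replicas u)
  obtain ⟨K, hKB, hK, hcard⟩ := exists_isClique_card_eq_cliqueNumOn G.blowup (replicas u)
  have hle : cliqueNumOn G.blowup (replicas u) ≤ m := by
    refine hcard ▸ (card_le_sum_of_subset_replicas hKB).trans (hu _ fun i hi j hj hij => ?_)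
    obtain ⟨p, hp, rfl⟩ := Finset.mem_image.1 hi
    obtain ⟨q, hq, rfl⟩ := Finset.mem_image.1 hj
    exact ((blowup_adj.1 (hK hp hq fun h => hij (h ▸ rfl))).2.resolve_left hij)
  rw [← sum_replicas]
  exact (hc.mono subset_rfl hle).sum_le_mul_alphaW

lemma sum_card_filter_mem_mul (F : Finset (Finset V)) (f : V → ℝ) :
    ∑ i, ((F.filter (i ∈ ·)).card : ℝ) * f i = ∑ S ∈ F, ∑ i ∈ S, f i := by
  simp only [Finset.card_filter, Nat.cast_sum, Nat.cast_ite, Nat.cast_one, Nat.cast_zero,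
    Finset.sum_mul, ite_mul, one_mul, zero_mul]
  rw [Finset.sum_comm]
  simp [Finset.sum_ite_mem]

/-- Otherwise, replicating every vertex once for each of the `k` maximum stable sets of positive
weights containing it yields cliques of size `< k`, hence `k α ≤ (k - 1) α`. -/
theorem IsPerfect.exists_isClique_forall_inter_nonempty (hG : IsPerfect G)
    (hw : ∀ i, 0 ≤ w i) (hα : 0 < alphaW G w) :
    ∃ Q : Finset V, G.IsClique (Q : Set V) ∧ (∀ i ∈ Q, 0 < w i) ∧
      ∀ S : Finset V, G.IsIndepSet (S : Set V) → ∑ i ∈ S, w i = alphaW G w →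
        (S ∩ Q).Nonempty := by
  classical
  by_contra! hQ
  set F := Finset.univ.filter fun S : Finset V =>
    G.IsIndepSet (S : Set V) ∧ (∀ i ∈ S, 0 < w i) ∧ ∑ i ∈ S, w i = alphaW G w
  have hmemF {S : Finset V} : S ∈ F ↔
      G.IsIndepSet (S : Set V) ∧ (∀ i ∈ S, 0 < w i) ∧ ∑ i ∈ S, w i = alphaW G w := by
    simp [F]
  set u : V → ℕ := fun i => (F.filter (i ∈ ·)).card
  have hu (Q : Finset V) (hQc : G.IsClique (Q : Set V)) : ∑ i ∈ Q, u i ≤ F.card - 1 := by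
    set Q' := Q.filter (0 < u ·)
    have hQ'c : G.IsClique (Q' : Set V) :=
      hQc.subset (Finset.coe_subset.2 (Finset.filter_subset _ _))
    have hQ'pos : ∀ i ∈ Q', 0 < w i := fun i hi => by
      obtain ⟨S, hS⟩ := Finset.card_pos.1 (Finset.mem_filter.1 hi).2
      exact (hmemF.1 (Finset.mem_filter.1 hS).1).2.1 i (Finset.mem_filter.1 hS).2
    obtain ⟨S, hS, hSα, hSQ'⟩ := hQ Q' hQ'c hQ'pos
    have hS₀ : S.filter (0 < w ·) ∈ F := by
      refine hmemF.2 ⟨hS.mono (Finset.coe_subset.2 (Finset.filter_subset _ _)),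
        fun i hi => (Finset.mem_filter.1 hi).2, ?_⟩
      rwa [Finset.sum_filter_of_ne fun i _ hi => (hw i).lt_of_ne' hi]
    have hdisj : Q' ∩ S.filter (0 < w ·) = ∅ :=
      Finset.eq_empty_of_forall_notMem fun i hi => by
        simp only [Finset.mem_inter, Finset.mem_filter] at hi
        exact Finset.notMem_empty i (hSQ' ▸ Finset.mem_inter.2 ⟨hi.2.1, hi.1⟩)
    rw [← Finset.sum_filter_of_ne fun i _ hi => Nat.pos_of_ne_zero hi]
    exact sum_card_filter_mem_le_card_sub_one (fun S hS => (hmemF.1 hS).1) hQ'c hS₀ hdisj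
  have hcount : ∑ i, (u i : ℝ) * w i = F.card * alphaW G w := by
    rw [sum_card_filter_mem_mul, Finset.sum_congr rfl fun S hS => (hmemF.1 hS).2.2]
    simp
  have hF : 0 < F.card := by
    obtain ⟨S, hS, hSpos, hSα⟩ := exists_isIndepSet_sum_eq_alphaW_pos G hw
    exact Finset.card_pos.2 ⟨S, hmemF.2 ⟨hS, hSpos, hSα⟩⟩
  have := hcount ▸ hG.sum_mul_le_mul_alphaW u _ hu
  rw [Nat.cast_sub hF, Nat.cast_one] at this
  linarith

end CliqueTransversal

section Peel

variable {V : Type*} [DecidableEq V] {G : SimpleGraph V} {w : V → ℝ} {Q : Finset V} {ε : ℝ}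

def peel (w : V → ℝ) (Q : Finset V) (ε : ℝ) (i : V) : ℝ := w i - if i ∈ Q then ε else 0

lemma sum_peel (S : Finset V) : ∑ i ∈ S, peel w Q ε i = ∑ i ∈ S, w i - (S ∩ Q).card * ε := by
  simp only [peel]
  rw [Finset.sum_sub_distrib, Finset.sum_ite_mem, Finset.sum_const, nsmul_eq_mul]

variable [Fintype V]

lemma alphaW_peel (hQ : G.IsClique (Q : Set V))
    (hmax : ∀ S : Finset V, G.IsIndepSet (S : Set V) → ∑ i ∈ S, w i = alphaW G w →
      (S ∩ Q).Nonempty)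
    (hdisj : ∀ S : Finset V, G.IsIndepSet (S : Set V) → S ∩ Q = ∅ →
      ∑ i ∈ S, w i ≤ alphaW G w - ε) :
    alphaW G (peel w Q ε) = alphaW G w - ε := by
  refine le_antisymm ?_ ?_
  · obtain ⟨S, hS, hSα⟩ := exists_isIndepSet_sum_eq_alphaW G (peel w Q ε)
    rw [← hSα, sum_peel]
    rcases Nat.le_one_iff_eq_zero_or_eq_one.1 (hS.card_inter_le_one_of_isClique hQ) with h | h
    · simpa [h] using hdisj S hS (Finset.card_eq_zero.1 h)
    · simpa [h] using le_alphaW (w := w) hS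
  · obtain ⟨S, hS, hSα⟩ := exists_isIndepSet_sum_eq_alphaW G w
    have h : (S ∩ Q).card = 1 := le_antisymm (hS.card_inter_le_one_of_isClique hQ)
      (Finset.card_pos.2 (hmax S hS hSα))
    simpa [sum_peel, h, hSα] using le_alphaW (w := peel w Q ε) hS

open Classical in
noncomputable def peelMeasure (G : SimpleGraph V) (w : V → ℝ) : ℕ :=
  (Finset.univ.filter (0 < w ·)).card + (Finset.univ.filter fun S : Finset V =>
    G.IsIndepSet (S : Set V) ∧ ∑ i ∈ S, w i < alphaW G w).card

open Classical in
/-- Peeling never revives a vertex or makes a maximum stable set non-maximum; it either kills a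
vertex or makes a new stable set maximum. -/
lemma peelMeasure_peel_lt (hQ : G.IsClique (Q : Set V)) (hε : 0 < ε)
    (hα : alphaW G (peel w Q ε) = alphaW G w - ε)
    (hprogress : (∃ i ∈ Q, w i = ε) ∨ ∃ S : Finset V, G.IsIndepSet (S : Set V) ∧ S ∩ Q = ∅ ∧
      ∑ i ∈ S, w i = alphaW G w - ε) :
    peelMeasure G (peel w Q ε) < peelMeasure G w := by
  have hle (i : V) : peel w Q ε i ≤ w i := by
    simp only [peel]; split_ifs <;> linarith
  have hsupp : Finset.univ.filter (0 < peel w Q ε ·) ⊆ Finset.univ.filter (0 < w ·) :=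
    Finset.monotone_filter_right _ fun i _ hi => hi.trans_le (hle i)
  have hnonmax : Finset.univ.filter (fun S : Finset V => G.IsIndepSet (S : Set V) ∧
        ∑ i ∈ S, peel w Q ε i < alphaW G (peel w Q ε)) ⊆
      Finset.univ.filter fun S : Finset V => G.IsIndepSet (S : Set V) ∧
        ∑ i ∈ S, w i < alphaW G w := by
    refine Finset.monotone_filter_right _ fun S _ ⟨hS, hSα⟩ => ⟨hS, ?_⟩
    have h1 : ((S ∩ Q).card : ℝ) ≤ 1 := mod_cast hS.card_inter_le_one_of_isClique hQ
    rw [sum_peel, hα] at hSα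
    nlinarith
  unfold peelMeasure
  rcases hprogress with ⟨i, hiQ, hi⟩ | ⟨S, hS, hSQ, hSα⟩
  · refine add_lt_add_of_lt_of_le (Finset.card_lt_card ((Finset.ssubset_iff_of_subset hsupp).2
      ⟨i, by simpa [hi] using hε, by simp [peel, hiQ, hi]⟩)) (Finset.card_le_card hnonmax)
  · refine add_lt_add_of_le_of_lt (Finset.card_le_card hsupp)
      (Finset.card_lt_card ((Finset.ssubset_iff_of_subset hnonmax).2 ⟨S, ?_, ?_⟩))
    · simpa [hS, hSα] using hε
    · simp [sum_peel, hSQ, hSα, hα]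

end Peel

section FractionalCliqueCover

variable {V : Type*} [Fintype V] [DecidableEq V] {G : SimpleGraph V} {w : V → ℝ}

lemma IsPerfect.exists_peel (hG : IsPerfect G) (hw : ∀ i, 0 ≤ w i) (hα : 0 < alphaW G w) :
    ∃ Q : Finset V, ∃ ε > 0, G.IsClique (Q : Set V) ∧ (∀ i, 0 ≤ peel w Q ε i) ∧
      alphaW G (peel w Q ε) = alphaW G w - ε ∧ peelMeasure G (peel w Q ε) < peelMeasure G w := by
  classical
  obtain ⟨Q, hQ, hQpos, hmax⟩ := hG.exists_isClique_forall_inter_nonempty hw hα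
  obtain ⟨S₀, hS₀, hS₀α⟩ := exists_isIndepSet_sum_eq_alphaW G w
  obtain ⟨i₀, hi₀, hmin⟩ := Q.exists_min_image w
    ((hmax S₀ hS₀ hS₀α).mono Finset.inter_subset_right)
  -- `S₁` is a heaviest stable set avoiding `Q`; it is not maximum since `Q` meets those.
  set D := Finset.univ.filter fun S : Finset V => G.IsIndepSet (S : Set V) ∧ S ∩ Q = ∅
  have hmemD {S : Finset V} : S ∈ D ↔ G.IsIndepSet (S : Set V) ∧ S ∩ Q = ∅ := by simp [D]
  obtain ⟨S₁, hS₁, hmaxD⟩ := D.exists_max_image (∑ i ∈ ·, w i) ⟨∅, hmemD.2 (by simp)⟩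
  obtain ⟨hS₁, hS₁Q⟩ := hmemD.1 hS₁
  have hS₁lt : ∑ i ∈ S₁, w i < alphaW G w := (le_alphaW hS₁).lt_of_ne fun h => by
    simpa [hS₁Q] using hmax S₁ hS₁ h
  set ε := min (w i₀) (alphaW G w - ∑ i ∈ S₁, w i)
  have hε : 0 < ε := lt_min (hQpos i₀ hi₀) (sub_pos.2 hS₁lt)
  have hα' : alphaW G (peel w Q ε) = alphaW G w - ε := alphaW_peel hQ hmax fun S hS hSQ =>
    (hmaxD S (hmemD.2 ⟨hS, hSQ⟩)).trans
      (by linarith [min_le_right (w i₀) (alphaW G w - ∑ i ∈ S₁, w i)])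
  refine ⟨Q, ε, hε, hQ, fun i => ?_, hα', peelMeasure_peel_lt hQ hε hα' ?_⟩
  · simp only [peel]
    split_ifs with hi
    · linarith [hmin i hi, min_le_left (w i₀) (alphaW G w - ∑ i ∈ S₁, w i)]
    · simpa using hw i
  · rcases min_choice (w i₀) (alphaW G w - ∑ i ∈ S₁, w i) with h | h
    · exact Or.inl ⟨i₀, hi₀, h.symm⟩
    · exact Or.inr ⟨S₁, hS₁, hS₁Q, by linarith⟩

theorem IsPerfect.exists_isFractionalCliqueCover (hG : IsPerfect G) (hw : ∀ i, 0 ≤ w i) :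
    ∃ y, IsFractionalCliqueCover G w y ∧ ∑ Q, y Q = alphaW G w := by
  induction hn : peelMeasure G w using Nat.strong_induction_on generalizing w with
  | _ n ih =>
  rcases (alphaW_nonneg G w).lt_or_eq with hα | hα
  · obtain ⟨Q, ε, hε, hQ, hw', hα', hlt⟩ := hG.exists_peel hw hα
    obtain ⟨y, hy, hsum⟩ := ih _ (hn ▸ hlt) hw' rfl
    refine ⟨y + Pi.single Q ε, ⟨fun R => ?_, fun R hR => ?_, fun i => ?_⟩, ?_⟩
    · exact add_nonneg (hy.nonneg R) (by by_cases h : R = Q <;> simp [h, hε.le])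
    · by_cases h : R = Q
      · exact h ▸ hQ
      · exact hy.isClique_of_ne_zero R (by simpa [h] using hR)
    · simp only [Pi.add_apply, Finset.sum_add_distrib, hy.sum_filter_mem, Finset.sum_pi_single',
        Finset.mem_filter, Finset.mem_univ, true_and, peel]
      split_ifs <;> ring
    · simp [Finset.sum_add_distrib, hsum, hα']
  · refine ⟨0, ⟨fun _ => le_rfl, fun _ h => absurd rfl h, fun i => ?_⟩, by simp [← hα]⟩
    have := le_alphaW (w := w) (G := G) (S := {i}) (by simp)
    simp only [Finset.sum_singleton] at this
    simp only [Pi.zero_apply, Finset.sum_const_zero]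
    linarith [hw i]

end FractionalCliqueCover

section PartOne

variable {V : Type*} [Fintype V] [DecidableEq V] {G : SimpleGraph V} {w : V → ℝ}

theorem IsPerfect.inHandelman_cliqueNumber' (hG : IsPerfect G) (hw : ∀ i, 0 ≤ w i)
    {W : V → V → ℝ} (hW : ∀ i j, G.Adj i j → max (w i) (w j) ≤ W i j) :
    InHandelman (cliqueNumber' G) (C (alphaW G w) - pGW G w W) := by
  classical
  obtain ⟨y, hy, hsum⟩ := hG.exists_isFractionalCliqueCover hw
  have hclique {Q : Finset V} (hQ : G.IsClique (Q : Set V)) :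
      handelmanCone {T | T ⊆ Q} ≤ handelmanCone {T | T.card ≤ cliqueNumber' G} :=
    handelmanCone_mono fun T hT => cliqueNumber'_eq_cliqueNum G ▸
      (Finset.card_le_card hT).trans hQ.card_le_cliqueNum
  apply inHandelman_of_mem_handelmanCone
  rw [← hsum, hy.C_sub_pGW_eq]
  refine add_mem (Submodule.sum_mem _ fun Q _ => ?_)
    (C_mul_mem_handelmanCone (by norm_num) (Submodule.sum_mem _ fun q hq => ?_))
  · rcases eq_or_ne (y Q) 0 with h | h
    · simp [h]
    exact C_mul_mem_handelmanCone (hy.nonneg Q)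
      (hclique (hy.isClique_of_ne_zero Q h) (cliquePoly_mem_handelmanCone Q))
  · have hadj : G.Adj q.1 q.2 := by simpa using hq
    have hcover : ∑ Q with q.1 ∈ Q ∧ q.2 ∈ Q, y Q ≤ w q.1 :=
      hy.sum_filter_mem q.1 ▸ Finset.sum_le_sum_of_subset_of_nonneg
        (Finset.monotone_filter_right _ fun _ _ h => h.1) fun Q _ _ => hy.nonneg Q
    have hpair : G.IsClique (({q.1, q.2} : Finset V) : Set V) := by
      rw [Finset.coe_pair]; exact G.isClique_pair.2 fun _ => hadj
    refine C_mul_mem_handelmanCone ?_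
      (hclique hpair (X_mul_X_mem_handelmanCone hadj.ne (Finset.Subset.refl _)))
    linarith [hW _ _ hadj, le_max_left (w q.1) (w q.2)]

end PartOne

section Evaluation

variable {V : Type*} [Fintype V] {G : SimpleGraph V} {w : V → ℝ} {W : V → V → ℝ}

lemma eval_zero_sub_pGW : eval 0 (C (alphaW G w) - pGW G w W) = alphaW G w := by
  simp [pGW]

lemma eval_indicator_sub_pGW [DecidableEq V] {S : Finset V} (hS : G.IsIndepSet (S : Set V)) :
    eval (fun i => if i ∈ S then 1 else 0) (C (alphaW G w) - pGW G w W) =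
      alphaW G w - ∑ i ∈ S, w i := by
  classical
  have hquad : ∀ q : V × V, G.Adj q.1 q.2 →
      W q.1 q.2 * ((if q.1 ∈ S then 1 else 0) * (if q.2 ∈ S then 1 else 0)) = (0 : ℝ) := by
    intro q hq
    by_cases h₁ : q.1 ∈ S
    · by_cases h₂ : q.2 ∈ S
      · exact (hS h₁ h₂ hq.ne hq).elim
      · simp [h₂]
    · simp [h₁]
  simp only [pGW, map_sub, map_mul, map_sum, eval_C, eval_X]
  rw [Finset.sum_eq_zero fun q hq => hquad q (Finset.mem_filter.1 hq).2]
  simp [Finset.sum_ite_mem]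

end Evaluation

section LowerBound

variable {V : Type*} [DecidableEq V]

lemma eval_handTerm_nonneg {x : V → ℝ} (hx : ∀ i, 0 ≤ x i ∧ x i ≤ 1) (T I : Finset V) :
    0 ≤ eval x (handTerm T I) := by
  simp only [handTerm, map_mul, map_prod, map_sub, map_one, eval_X]
  exact mul_nonneg (Finset.prod_nonneg fun i _ => (hx i).1)
    (Finset.prod_nonneg fun j _ => sub_nonneg.2 (hx j).2)

/-- Evaluating the certificate at `0` shows some coefficient `c_{T,∅}` of `∏_{j ∈ T} (1 - x_j)` is
nonzero; evaluated at a 0/1 zero of `p` every term vanishes, so that zero has a coordinate `1`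
in `T`. -/
lemma InHandelman.exists_card_le_forall_inter_nonempty [Fintype V] {t : ℕ} {p : MvPolynomial V ℝ}
    (hp : InHandelman t p) (h0 : eval 0 p ≠ 0) :
    ∃ T : Finset V, T.card ≤ t ∧ ∀ S : Finset V,
      eval (fun i => if i ∈ S then 1 else 0) p = 0 → (T ∩ S).Nonempty := by
  obtain ⟨c, hc, rfl⟩ := hp
  have heval0 : ∀ T, ∑ I ∈ T.powerset, eval 0 (C (c T I) * handTerm T I) = c T ∅ := fun T => by
    rw [Finset.sum_eq_single_of_mem ∅ (Finset.empty_mem_powerset T) fun I _ hI => by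
      obtain ⟨i, hi⟩ := Finset.nonempty_iff_ne_empty.2 hI
      simp [handTerm, Finset.prod_eq_zero hi]]
    simp [handTerm]
  simp only [map_sum, heval0] at h0
  obtain ⟨T, hT, hcT⟩ := Finset.exists_ne_zero_of_sum_ne_zero h0
  refine ⟨T, (Finset.mem_filter.1 hT).2, fun S hS => ?_⟩
  set χ : V → ℝ := fun i => if i ∈ S then 1 else 0
  have hχ (i : V) : 0 ≤ χ i ∧ χ i ≤ 1 := by simp only [χ]; split_ifs <;> norm_num
  have hterm_nonneg (T I : Finset V) : 0 ≤ eval χ (C (c T I) * handTerm T I) := by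
    rw [map_mul, eval_C]
    exact mul_nonneg (hc T I) (eval_handTerm_nonneg hχ T I)
  simp only [map_sum] at hS
  have hterm := (Finset.sum_eq_zero_iff_of_nonneg fun I _ => hterm_nonneg T I).1
    ((Finset.sum_eq_zero_iff_of_nonneg fun T _ => Finset.sum_nonneg fun I _ =>
      hterm_nonneg T I).1 hS T hT) ∅ (Finset.empty_mem_powerset T)
  by_contra hTS
  have hone : eval χ (handTerm T ∅) = 1 := by
    simp only [handTerm, Finset.prod_empty, one_mul, Finset.sdiff_empty, map_prod, map_sub,
      map_one, eval_X]
    refine Finset.prod_eq_one fun j hj => ?_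
    simp [χ, show j ∉ S from fun hjS => hTS ⟨j, Finset.mem_inter.2 ⟨hj, hjS⟩⟩]
  exact hcT (by simpa [hone] using hterm)

end LowerBound

section VertexTransitive

variable {V : Type*} [Fintype V] [DecidableEq V] {G : SimpleGraph V}

/-- Count the pairs `(g, q)` of an automorphism and a vertex of `Q` with `g q ∈ S`: each
automorphism contributes at most one, and by transitivity each `q` contributes
`|Aut G| |S| / |V|`. -/
theorem card_mul_card_le_card_of_forall_exists_iso
    (htrans : ∀ u v : V, ∃ e : G ≃g G, e u = v) {Q S : Finset V}
    (hQ : G.IsClique (Q : Set V)) (hS : G.IsIndepSet (S : Set V)) :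
    Q.card * S.card ≤ Fintype.card V := by
  classical
  have : Fintype (G ≃g G) := Fintype.ofInjective _ DFunLike.coe_injective
  set N := Fintype.card (G ≃g G)
  set k : V → ℕ := fun v => (Finset.univ.filter fun g : G ≃g G => g v ∈ S).card
  have hk (u v : V) : k u = k v := by
    obtain ⟨e, rfl⟩ := htrans u v
    exact Finset.card_equiv (Equiv.mulRight e⁻¹) fun g => by simp [RelIso.mul_apply]
  have hsum : ∑ v, k v = N * S.card := by
    simp only [k, Finset.card_filter]
    rw [Finset.sum_comm]
    simp only [← Finset.card_filter]
    rw [Finset.sum_congr rfl fun g _ => Finset.card_equiv (t := S) g.toEquiv fun v => by simp]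
    simp [N]
  have hcount : ∑ g : G ≃g G, (Q.filter fun q => g q ∈ S).card = ∑ q ∈ Q, k q := by
    simp only [k, Finset.card_filter]
    exact Finset.sum_comm
  have hle : ∑ q ∈ Q, k q ≤ N := by
    rw [← hcount]
    refine (Finset.sum_le_sum fun g _ => Finset.card_le_one.2 fun q hq q' hq' => ?_).trans_eq
      (by simp [N])
    rw [Finset.mem_filter] at hq hq'
    by_contra hne
    exact hS hq.2 hq'.2 (g.injective.ne hne) (g.map_adj_iff.2 (hQ hq.1 hq'.1 hne))
  have hN : 0 < N := Fintype.card_pos_iff.2 ⟨1⟩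
  have hkey : Fintype.card V * ∑ q ∈ Q, k q = Q.card * (N * S.card) := by
    rw [Finset.mul_sum, Finset.card_eq_sum_ones, Finset.sum_mul, one_mul]
    refine Finset.sum_congr rfl fun q _ => ?_
    rw [← hsum, Finset.sum_congr rfl fun v _ => hk v q]
    simp
  have := Nat.mul_le_mul_left (Fintype.card V) hle
  rw [hkey] at this
  nlinarith

/-- Every colour class of an `ω(G)`-colouring is a maximum stable set, and these classes are
disjoint. -/
theorem IsPerfect.cliqueNum_le_card_of_forall_inter_nonempty (hG : IsPerfect G)
    (htrans : ∀ u v : V, ∃ e : G ≃g G, e u = v) {T : Finset V}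
    (hT : ∀ S : Finset V, G.IsIndepSet (S : Set V) → S.card = G.indepNum → (T ∩ S).Nonempty) :
    G.cliqueNum ≤ T.card := by
  obtain ⟨c, hc⟩ := hG.exists_isColoringOn Finset.univ
  obtain ⟨Q, -, hQ, hQcard⟩ := exists_isClique_card_eq_cliqueNumOn G Finset.univ
  set ω := cliqueNumOn G Finset.univ
  set colourClass : ℕ → Finset V := fun k => Finset.univ.filter (c · = k)
  have hindep (k : ℕ) : G.IsIndepSet (colourClass k : Set V) := fun p hp q hq _ hpq => by
    simp only [colourClass, Finset.coe_filter, Set.mem_ofPred_eq, Finset.mem_univ,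
      true_and] at hp hq
    exact hc.2 p (Finset.mem_univ p) q (Finset.mem_univ q) hpq (hp.trans hq.symm)
  have hsum : ∑ k ∈ Finset.range ω, (colourClass k).card = Fintype.card V :=
    (Finset.card_eq_sum_card_fiberwise fun p _ =>
      Finset.mem_range.2 (hc.1 p (Finset.mem_univ p))).symm
  obtain ⟨S₀, hS₀⟩ := G.exists_isNIndepSet_indepNum
  have hle : ∑ _k ∈ Finset.range ω, G.indepNum ≤ ∑ k ∈ Finset.range ω, (colourClass k).card := by
    rw [hsum, Finset.sum_const, Finset.card_range, smul_eq_mul, ← hQcard, ← hS₀.card_eq]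
    exact card_mul_card_le_card_of_forall_exists_iso htrans hQ hS₀.isIndepSet
  have hcard := (Finset.sum_eq_sum_iff_of_le fun k _ => (hindep k).card_le_indepNum).1
    (le_antisymm (Finset.sum_le_sum fun k _ => (hindep k).card_le_indepNum) hle)
  have hrange : Finset.range ω ⊆ T.image c := fun k hk => by
    obtain ⟨p, hp⟩ := hT _ (hindep k) (hcard k hk)
    rw [Finset.mem_inter] at hp
    exact Finset.mem_image.2 ⟨p, hp.1, (Finset.mem_filter.1 hp.2).2⟩
  obtain ⟨K, hK⟩ := G.exists_isNClique_cliqueNum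
  calc G.cliqueNum = K.card := hK.card_eq.symm
    _ ≤ ω := hK.isClique.card_le_cliqueNumOn (Finset.subset_univ K)
    _ ≤ T.card := by simpa using (Finset.card_le_card hrange).trans Finset.card_image_le

end VertexTransitive

theorem perfect_handelman_rank_general {V : Type*} [Fintype V] [DecidableEq V]
    (G : SimpleGraph V) (hperf : IsPerfect G)
    (w : V → ℝ) (W : V → V → ℝ) (hw : ∀ v, 0 ≤ w v)
    (hW : ∀ i j, G.Adj i j → max (w i) (w j) ≤ W i j) :
    InHandelman (cliqueNumber' G) (C (alphaW G w) - pGW G w W) ∧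
    ((∀ v, w v = 1) → (∀ i j, G.Adj i j → W i j = 1) →
      (∀ u v : V, ∃ e : G ≃g G, e u = v) →
      sInf {t : ℕ | InHandelman t (C (alphaW G w) - pGW G w W)} = cliqueNumber' G) := by
  have hmem := hperf.inHandelman_cliqueNumber' hw hW
  refine ⟨hmem, fun hw1 _ htrans =>
    le_antisymm (Nat.sInf_le hmem) (le_csInf ⟨_, hmem⟩ fun t ht => ?_)⟩
  obtain rfl : w = fun _ => 1 := funext hw1
  rw [cliqueNumber'_eq_cliqueNum]
  by_contra! hlt
  obtain ⟨K, hK⟩ := G.exists_isNClique_cliqueNum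
  obtain ⟨v, -⟩ := Finset.card_pos.1 (hK.card_eq ▸ t.zero_le.trans_lt hlt)
  have : Nonempty V := ⟨v⟩
  obtain ⟨T, hT, hTS⟩ := ht.exists_card_le_forall_inter_nonempty
    (by rw [eval_zero_sub_pGW]; linarith [one_le_alphaW_one G])
  refine (hT.trans_lt hlt).not_ge (hperf.cliqueNum_le_card_of_forall_inter_nonempty htrans
    fun S hS hcard => hTS S ?_)
  rw [eval_indicator_sub_pGW hS, alphaW_one]
  simp [hcard]

/-- If `G` is perfect, with node weights `w ≥ 0` and edge weights
`w_{ij} ≥ max(w_i,w_j)`, then `rk_H(G,w) ≤ ω(G)`, i.e. `f_{G,w} ∈ H_{ω(G)}`.  Moreover, in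
the unweighted case (`w ≡ 1`, edge weights `1`), if `G` is also vertex-transitive then
`rk_H(G) = ω(G)`, where the Handelman rank is the least `t` with `f_G ∈ H_t`. -/
theorem perfect_handelman_rank {V : Type*} [Fintype V] [DecidableEq V]
    (G : SimpleGraph V) (hperf : IsPerfect G)
    (w : V → ℝ) (W : V → V → ℝ) (hw : ∀ v, 0 ≤ w v)
    (hWs : ∀ i j, W i j = W j i)
    (hW : ∀ i j, G.Adj i j → max (w i) (w j) ≤ W i j) :
    InHandelman (cliqueNumber' G) (C (alphaW G w) - pGW G w W) ∧
    ((∀ v, w v = 1) → (∀ i j, G.Adj i j → W i j = 1) →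
      (∀ u v : V, ∃ e : G ≃g G, e u = v) →
      sInf {t : ℕ | InHandelman t (C (alphaW G w) - pGW G w W)} = cliqueNumber' G) :=
  perfect_handelman_rank_general G hperf w W hw hW
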